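/- arXiv:2603.08354 — 6 statements merged into one kernel-verified Lean document; each statement's English description precedes it below -/
import Mathlib

section
/- (Cline's formula for dual Drazin inverses.) Let \(\widehat{A}\) be an \(m\times n\) and \(\widehat{B}\) an \(n\times m\) dual complex matrix. If \(\widehat{X}\) is a dual Drazin inverse of \(\widehat{B}\widehat{A}\) (with respect to some index \(k-1 \geq 1\)), then \(\widehat{A}\widehat{X}^{2}\widehat{B}\) is a dual Drazin inverse of \(\widehat{A}\widehat{B}\) with respect to index \(k\); i.e., \((\widehat{A}\widehat{B})^D = \widehat{A}(\widehat{B}\widehat{A})^{2D}\widehat{B}\). -/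
open Matrix

abbrev DC := DualNumber ℂ

theorem stmt3 {m n : ℕ} (A : Matrix (Fin m) (Fin n) DC) (B : Matrix (Fin n) (Fin m) DC)
    (X : Matrix (Fin n) (Fin n) DC) (k : ℕ) (hk : 2 ≤ k)
    (h1 : (B * A) ^ (k - 1) * X * (B * A) = (B * A) ^ (k - 1))
    (h2 : X * (B * A) * X = X) (h3 : (B * A) * X = X * (B * A)) :
    (A * B) ^ k * (A * X ^ 2 * B) * (A * B) = (A * B) ^ k ∧
    (A * X ^ 2 * B) * (A * B) * (A * X ^ 2 * B) = A * X ^ 2 * B ∧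
    (A * B) * (A * X ^ 2 * B) = (A * X ^ 2 * B) * (A * B) := by
  have cx2 : B * A * (X * X) = X := by
    rw [← Matrix.mul_assoc, h3, Matrix.mul_assoc, ← Matrix.mul_assoc, h2]
  have xc2 : X * X * (B * A) = X := by
    rw [Matrix.mul_assoc, ← h3, ← Matrix.mul_assoc, h2]
  have lemA : ∀ (p : ℕ) (M : Matrix (Fin n) (Fin p) DC),
      B * (A * (X * (X * M))) = X * M := by
    intro p M
    calc B * (A * (X * (X * M))) = B * A * (X * X) * M := by
          simp only [Matrix.mul_assoc]
      _ = X * M := by rw [cx2]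
  have lemB : ∀ (p : ℕ) (M : Matrix (Fin n) (Fin p) DC),
      X * (X * (B * (A * M))) = X * M := by
    intro p M
    calc X * (X * (B * (A * M))) = X * X * (B * A) * M := by
          simp only [Matrix.mul_assoc]
      _ = X * M := by rw [xc2]
  have lemC : ∀ (p : ℕ) (M : Matrix (Fin n) (Fin p) DC),
      (B * A) ^ (k - 1) * (X * (B * (A * M))) = (B * A) ^ (k - 1) * M := by
    intro p M
    calc (B * A) ^ (k - 1) * (X * (B * (A * M)))
        = (B * A) ^ (k - 1) * X * (B * A) * M := by simp only [Matrix.mul_assoc]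
      _ = (B * A) ^ (k - 1) * M := by rw [h1]
  have powAB : ∀ j : ℕ, (A * B) ^ (j + 1) = A * ((B * A) ^ j * B) := by
    intro j
    induction j with
    | zero => simp
    | succ j ih =>
      rw [pow_succ, ih, pow_succ]
      simp only [Matrix.mul_assoc]
  have hk1 : k - 1 + 1 = k := by omega
  rw [← hk1, powAB (k - 1), pow_two]
  refine ⟨?_, ?_, ?_⟩
  · simp only [Matrix.mul_assoc, lemA, lemC]
  · simp only [Matrix.mul_assoc, lemA, lemB]
  · simp only [Matrix.mul_assoc, lemA, lemB]
end

section
/- Let \(\widehat{W} = \begin{pmatrix} \widehat{A} & \widehat{B} \\ O & \widehat{D} \end{pmatrix}\) be a block upper triangular dual complex matrix where \(\widehat{A}\) has a dual Drazin inverse \(\widehat{A}^D\) with index \(p\) and \(\widehat{D}\) has a dual Drazin inverse \(\widehat{D}^D\) with index \(q\). Define \(\widehat{S} = \sum_{i=0}^{q-1} (\widehat{A}^D)^{i+2} \widehat{B} \widehat{D}^i (I - \widehat{D}\widehat{D}^D) + (I - \widehat{A}\widehat{A}^D) \sum_{i=0}^{p-1} \widehat{A}^i \widehat{B} (\widehat{D}^D)^{i+2}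 - \widehat{A}^D \widehat{B} \widehat{D}^D\). Then \(\begin{pmatrix} \widehat{A}^D & \widehat{S} \\ O & \widehat{D}^D \end{pmatrix}\) is a dual Drazin inverse of \(\widehat{W}\) (with respect to index \(p + q\)). -/
open Matrix Finset

section
variable {R : Type*} [Ring R] {k : ℕ}

-- generic square-matrix Drazin helper lemmas, for a ring element pair (a, ad)
variable {a ad : R} {p : ℕ}

theorem dz_shift (h1 : a ^ (p + 1) * ad = a ^ p) (r : ℕ) :
    a ^ (p + r + 1) * ad = a ^ (p + r) := by
  have e : a ^ (p + r + 1) = a ^ r * a ^ (p + 1) := by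
    rw [← pow_add]; congr 1; omega
  rw [e, mul_assoc, h1, ← pow_add]
  congr 1; omega

theorem dz_pow (h1 : a ^ (p + 1) * ad = a ^ p) :
    ∀ j r, a ^ (p + r + j) * ad ^ j = a ^ (p + r) := by
  intro j
  induction j with
  | zero => intro r; simp
  | succ j ih =>
    intro r
    rw [pow_succ, ← mul_assoc]
    have e : a ^ (p + r + (j + 1)) * ad ^ j = a ^ (p + r + 1) := by
      have e2 : p + r + (j + 1) = p + (r + 1) + j := by omega
      rw [e2, ih (r + 1)]
      congr 1
    rw [e, dz_shift h1 r]

theorem dz_pi (h1 : a ^ (p + 1) * ad = a ^ p) (r : ℕ) :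
    a ^ (p + r + 1) * (1 - a * ad) = 0 := by
  rw [mul_sub, mul_one, ← mul_assoc, ← pow_succ]
  have e : p + r + 1 + 1 = p + (r + 1) + 1 := by omega
  rw [e, dz_shift h1 (r + 1)]
  have e2 : p + (r + 1) = p + r + 1 := by omega
  rw [e2, sub_self]

theorem dz_pi0 (h1 : a ^ (p + 1) * ad = a ^ p) :
    a ^ p * (1 - a * ad) = 0 := by
  rw [mul_sub, mul_one, ← mul_assoc, ← pow_succ, h1, sub_self]

theorem dz_comm_pi (h3 : a * ad = ad * a) : Commute a (1 - a * ad) :=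
  (Commute.one_right a).sub_right ((Commute.refl a).mul_right h3)

theorem dz_pi0' (h1 : a ^ (p + 1) * ad = a ^ p) (h3 : a * ad = ad * a) :
    (1 - a * ad) * a ^ p = 0 := by
  rw [← ((dz_comm_pi h3).pow_left p).eq, dz_pi0 h1]

theorem dz_two (h2 : ad * a * ad = ad) (h3 : a * ad = ad * a) (i : ℕ) :
    a * ad ^ (i + 2) = ad ^ (i + 1) := by
  rw [pow_succ', pow_succ', ← mul_assoc, ← mul_assoc, h3, h2, ← pow_succ']

theorem dz_ada (h2 : ad * a * ad = ad) (j : ℕ) :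
    ad * a * ad ^ (j + 1) = ad ^ (j + 1) := by
  rw [pow_succ', ← mul_assoc, h2]

theorem dz_ada_pi (h2 : ad * a * ad = ad) (h3 : a * ad = ad * a) :
    ad * a * (1 - a * ad) = 0 := by
  rw [mul_sub, mul_one, h3, ← mul_assoc, h2, sub_self]

theorem dz_step (h2 : ad * a * ad = ad) : ad * (a * ad) = ad := by
  rw [← mul_assoc, h2]

theorem dz_pi_mul (h2 : ad * a * ad = ad) : (1 - a * ad) * (a * ad) = 0 := by
  rw [sub_mul, one_mul, mul_assoc, dz_step h2, sub_self]

theorem dz_pow_mul (h2 : ad * a * ad = ad) (i : ℕ) :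
    ad ^ (i + 1) * (a * ad) = ad ^ (i + 1) := by
  rw [pow_succ, mul_assoc, dz_step h2]

theorem dz_pow_two (h2 : ad * a * ad = ad) (h3 : a * ad = ad * a) (i : ℕ) :
    ad ^ (i + 2) * a = ad ^ (i + 1) := by
  rw [pow_succ, mul_assoc, ← h3, dz_pow_mul h2]

end

section
variable {R : Type*} [Ring R] {n m : ℕ}
variable {A AD : Matrix (Fin n) (Fin n) R} {B : Matrix (Fin n) (Fin m) R}
variable {D DD : Matrix (Fin m) (Fin m) R} {p q : ℕ}

-- abbreviation for the Schur-like term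
-- per-term manipulation lemmas
theorem t1 (hA2 : AD * A * AD = AD) (hA3 : A * AD = AD * A) (i : ℕ) :
    A * (AD ^ (i + 2) * B * D ^ i * (1 - D * DD)) = AD ^ (i + 1) * B * D ^ i * (1 - D * DD) := by
  simp only [← Matrix.mul_assoc]
  rw [dz_two hA2 hA3 i]

theorem t2 (hD3 : D * DD = DD * D) (i : ℕ) :
    (AD ^ (i + 2) * B * D ^ i * (1 - D * DD)) * D
      = AD ^ (i + 1 + 1) * B * D ^ (i + 1) * (1 - D * DD) := by
  have cPiD : Commute D (1 - D * DD) := (Commute.one_right D).sub_right ((Commute.refl D).mul_right hD3)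
  rw [Matrix.mul_assoc (AD ^ (i + 2) * B * D ^ i) (1 - D * DD) D, ← cPiD.eq]
  simp only [← Matrix.mul_assoc]
  rw [Matrix.mul_assoc (AD ^ (i + 2) * B) (D ^ i) D, ← pow_succ]

theorem tel1 (hA2 : AD * A * AD = AD) (hA3 : A * AD = AD * A)
    (hD1 : D ^ (q + 1) * DD = D ^ q) (hD3 : D * DD = DD * D) :
    A * (∑ i ∈ Finset.range q, AD ^ (i + 2) * B * D ^ i * (1 - D * DD))
      - (∑ i ∈ Finset.range q, AD ^ (i + 2) * B * D ^ i * (1 - D * DD)) * D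
    = AD * B * (1 - D * DD) := by
  rw [Matrix.mul_sum, Matrix.sum_mul, ← Finset.sum_sub_distrib]
  have h : ∀ i ∈ Finset.range q,
      A * (AD ^ (i + 2) * B * D ^ i * (1 - D * DD)) - (AD ^ (i + 2) * B * D ^ i * (1 - D * DD)) * D
      = (fun j => AD ^ (j + 1) * B * D ^ j * (1 - D * DD)) i
        - (fun j => AD ^ (j + 1) * B * D ^ j * (1 - D * DD)) (i + 1) := by
    intro i _
    simp only
    rw [t1 hA2 hA3 i, t2 hD3 i]
  rw [Finset.sum_congr rfl h, Finset.sum_range_sub' (fun j => AD ^ (j + 1) * B * D ^ j * (1 - D * DD)) q]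
  have hz : AD ^ (q + 1) * B * D ^ q * (1 - D * DD) = 0 := by
    rw [Matrix.mul_assoc (AD ^ (q + 1) * B) (D ^ q) (1 - D * DD), dz_pi0 hD1, Matrix.mul_zero]
  rw [hz, sub_zero]
  norm_num

theorem tel2 (hA1 : A ^ (p + 1) * AD = A ^ p) (hA3 : A * AD = AD * A)
    (hD2 : DD * D * DD = DD) (hD3 : D * DD = DD * D) :
    A * ((1 - A * AD) * (∑ i ∈ Finset.range p, A ^ i * B * DD ^ (i + 2)))
      - ((1 - A * AD) * (∑ i ∈ Finset.range p, A ^ i * B * DD ^ (i + 2))) * D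
    = -((1 - A * AD) * (B * DD)) := by
  have cA : Commute A (1 - A * AD) := dz_comm_pi hA3
  rw [← Matrix.mul_assoc A (1 - A * AD) _, cA.eq,
    Matrix.mul_assoc (1 - A * AD) A _, Matrix.mul_assoc (1 - A * AD) _ D,
    ← Matrix.mul_sub]
  have hAT : A * (∑ i ∈ Finset.range p, A ^ i * B * DD ^ (i + 2))
      - (∑ i ∈ Finset.range p, A ^ i * B * DD ^ (i + 2)) * D
      = A ^ p * B * DD ^ (p + 1) - B * DD := by
    rw [Matrix.mul_sum, Matrix.sum_mul, ← Finset.sum_sub_distrib]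
    have h : ∀ i ∈ Finset.range p,
        A * (A ^ i * B * DD ^ (i + 2)) - (A ^ i * B * DD ^ (i + 2)) * D
        = (fun j => A ^ j * B * DD ^ (j + 1)) (i + 1) - (fun j => A ^ j * B * DD ^ (j + 1)) i := by
      intro i _
      simp only
      have e1 : A * (A ^ i * B * DD ^ (i + 2)) = A ^ (i + 1) * B * DD ^ (i + 1 + 1) := by
        simp only [← Matrix.mul_assoc]
        rw [← pow_succ']
      have e2 : (A ^ i * B * DD ^ (i + 2)) * D = A ^ i * B * DD ^ (i + 1) := by
        rw [Matrix.mul_assoc (A ^ i * B) (DD ^ (i + 2)) D, dz_pow_two hD2 hD3 i]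
      rw [e1, e2]
    rw [Finset.sum_congr rfl h, Finset.sum_range_sub (fun j => A ^ j * B * DD ^ (j + 1)) p]
    norm_num
  rw [hAT, Matrix.mul_sub]
  have hz : (1 - A * AD) * (A ^ p * B * DD ^ (p + 1)) = 0 := by
    simp only [← Matrix.mul_assoc]
    rw [dz_pi0' hA1 hA3, Matrix.zero_mul, Matrix.zero_mul]
  rw [hz, zero_sub]

theorem key3 (hA1 : A ^ (p + 1) * AD = A ^ p) (hA2 : AD * A * AD = AD) (hA3 : A * AD = AD * A)
    (hD1 : D ^ (q + 1) * DD = D ^ q) (hD2 : DD * D * DD = DD) (hD3 : D * DD = DD * D) :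
    A * ((∑ i ∈ Finset.range q, AD ^ (i + 2) * B * D ^ i * (1 - D * DD))
      + (1 - A * AD) * (∑ i ∈ Finset.range p, A ^ i * B * DD ^ (i + 2))
      - AD * B * DD) + B * DD
    = AD * B + ((∑ i ∈ Finset.range q, AD ^ (i + 2) * B * D ^ i * (1 - D * DD))
      + (1 - A * AD) * (∑ i ∈ Finset.range p, A ^ i * B * DD ^ (i + 2))
      - AD * B * DD) * D := by
  rw [← sub_eq_sub_iff_add_eq_add]
  have e : A * ((∑ i ∈ Finset.range q, AD ^ (i + 2) * B * D ^ i * (1 - D * DD))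
        + (1 - A * AD) * (∑ i ∈ Finset.range p, A ^ i * B * DD ^ (i + 2))
        - AD * B * DD)
      - ((∑ i ∈ Finset.range q, AD ^ (i + 2) * B * D ^ i * (1 - D * DD))
        + (1 - A * AD) * (∑ i ∈ Finset.range p, A ^ i * B * DD ^ (i + 2))
        - AD * B * DD) * D
      = (A * (∑ i ∈ Finset.range q, AD ^ (i + 2) * B * D ^ i * (1 - D * DD))
          - (∑ i ∈ Finset.range q, AD ^ (i + 2) * B * D ^ i * (1 - D * DD)) * D)
        + (A * ((1 - A * AD) * (∑ i ∈ Finset.range p, A ^ i * B * DD ^ (i + 2)))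
          - ((1 - A * AD) * (∑ i ∈ Finset.range p, A ^ i * B * DD ^ (i + 2))) * D)
        - (A * (AD * B * DD) - AD * B * DD * D) := by
    simp only [Matrix.mul_sub, Matrix.mul_add, Matrix.sub_mul, Matrix.add_mul]
    abel
  rw [e, tel1 hA2 hA3 hD1 hD3, tel2 hA1 hA3 hD2 hD3]
  have e2 : A * (AD * B * DD) - AD * B * DD * D = A * AD * (B * DD) - AD * B * (D * DD) := by
    rw [Matrix.mul_assoc (AD * B) DD D, ← hD3]
    simp only [← Matrix.mul_assoc]
  rw [e2]
  simp only [Matrix.mul_sub, Matrix.sub_mul, Matrix.mul_one, Matrix.one_mul]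
  abel

theorem key2 (hA2 : AD * A * AD = AD) (hA3 : A * AD = AD * A)
    (hD2 : DD * D * DD = DD) (hD3 : D * DD = DD * D) :
    AD * A * ((∑ i ∈ Finset.range q, AD ^ (i + 2) * B * D ^ i * (1 - D * DD))
      + (1 - A * AD) * (∑ i ∈ Finset.range p, A ^ i * B * DD ^ (i + 2))
      - AD * B * DD)
    + (AD * B + ((∑ i ∈ Finset.range q, AD ^ (i + 2) * B * D ^ i * (1 - D * DD))
      + (1 - A * AD) * (∑ i ∈ Finset.range p, A ^ i * B * DD ^ (i + 2))
      - AD * B * DD) * D) * DD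
    = (∑ i ∈ Finset.range q, AD ^ (i + 2) * B * D ^ i * (1 - D * DD))
      + (1 - A * AD) * (∑ i ∈ Finset.range p, A ^ i * B * DD ^ (i + 2))
      - AD * B * DD := by
  have p1 : AD * A * (∑ i ∈ Finset.range q, AD ^ (i + 2) * B * D ^ i * (1 - D * DD))
      = (∑ i ∈ Finset.range q, AD ^ (i + 2) * B * D ^ i * (1 - D * DD) :
        Matrix (Fin n) (Fin m) R) := by
    rw [Matrix.mul_sum]
    refine Finset.sum_congr rfl fun i _ => ?_
    simp only [← Matrix.mul_assoc]
    rw [show (i : ℕ) + 2 = i + 1 + 1 from rfl, dz_ada hA2 (i + 1)]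
  have p2 : AD * A * ((1 - A * AD) * (∑ i ∈ Finset.range p, A ^ i * B * DD ^ (i + 2))) = 0 := by
    rw [← Matrix.mul_assoc, dz_ada_pi hA2 hA3, Matrix.zero_mul]
  have p3 : AD * A * (AD * B * DD) = AD * B * DD := by
    simp only [← Matrix.mul_assoc]
    rw [hA2]
  have p5 : (∑ i ∈ Finset.range q, AD ^ (i + 2) * B * D ^ i * (1 - D * DD)) * (D * DD)
      = (0 : Matrix (Fin n) (Fin m) R) := by
    rw [Matrix.sum_mul]
    refine Finset.sum_eq_zero fun i _ => ?_
    rw [Matrix.mul_assoc (AD ^ (i + 2) * B * D ^ i) (1 - D * DD) (D * DD), dz_pi_mul hD2,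
      Matrix.mul_zero]
  have p6' : (∑ i ∈ Finset.range p, A ^ i * B * DD ^ (i + 2)) * (D * DD)
      = (∑ i ∈ Finset.range p, A ^ i * B * DD ^ (i + 2) : Matrix (Fin n) (Fin m) R) := by
    rw [Matrix.sum_mul]
    refine Finset.sum_congr rfl fun i _ => ?_
    rw [Matrix.mul_assoc (A ^ i * B) (DD ^ (i + 2)) (D * DD),
      show (i : ℕ) + 2 = i + 1 + 1 from rfl, dz_pow_mul hD2 (i + 1)]
  have p6 : ((1 - A * AD) * (∑ i ∈ Finset.range p, A ^ i * B * DD ^ (i + 2))) * (D * DD)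
      = (1 - A * AD) * (∑ i ∈ Finset.range p, A ^ i * B * DD ^ (i + 2)) := by
    rw [Matrix.mul_assoc, p6']
  have p7 : (AD * B * DD) * (D * DD) = AD * B * DD := by
    rw [Matrix.mul_assoc (AD * B) DD (D * DD), dz_step hD2]
  set S1 := ∑ i ∈ Finset.range q, AD ^ (i + 2) * B * D ^ i * (1 - D * DD) with hS1
  set T := ∑ i ∈ Finset.range p, A ^ i * B * DD ^ (i + 2) with hT
  have e : AD * A * (S1 + (1 - A * AD) * T - AD * B * DD)
      + (AD * B + (S1 + (1 - A * AD) * T - AD * B * DD) * D) * DD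
      = AD * A * S1 + AD * A * ((1 - A * AD) * T) - AD * A * (AD * B * DD)
        + (AD * B * DD + (S1 * (D * DD) + ((1 - A * AD) * T) * (D * DD)
          - (AD * B * DD) * (D * DD))) := by
    simp only [Matrix.mul_add, Matrix.add_mul, Matrix.mul_sub, Matrix.sub_mul, Matrix.mul_assoc]
  rw [e, p1, p2, p3, p5, p6, p7]
  abel

theorem key1 (hA1 : A ^ (p + 1) * AD = A ^ p) (hA2 : AD * A * AD = AD) (hA3 : A * AD = AD * A)
    (hD1 : D ^ (q + 1) * DD = D ^ q) (hD2 : DD * D * DD = DD) (hD3 : D * DD = DD * D) :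
    A ^ (p + q + 1) * ((∑ i ∈ Finset.range q, AD ^ (i + 2) * B * D ^ i * (1 - D * DD))
      + (1 - A * AD) * (∑ i ∈ Finset.range p, A ^ i * B * DD ^ (i + 2))
      - AD * B * DD)
    + (∑ i ∈ Finset.range (p + q + 1), A ^ i * B * D ^ (p + q - i)) * DD
    = ∑ i ∈ Finset.range (p + q), A ^ i * B * D ^ (p + q - 1 - i) := by
  have q1 : A ^ (p + q + 1) * (∑ i ∈ Finset.range q, AD ^ (i + 2) * B * D ^ i * (1 - D * DD))
      = (∑ j ∈ Finset.range q, A ^ (p + j) * B * D ^ (q - 1 - j))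
        - (∑ j ∈ Finset.range q, A ^ (p + j) * B * (D ^ (q - j) * DD) :
          Matrix (Fin n) (Fin m) R) := by
    calc A ^ (p + q + 1) * (∑ i ∈ Finset.range q, AD ^ (i + 2) * B * D ^ i * (1 - D * DD))
        = (∑ i ∈ Finset.range q, A ^ (p + (q - 1 - i)) * B * D ^ i * (1 - D * DD) :
            Matrix (Fin n) (Fin m) R) := by
          rw [Matrix.mul_sum]
          refine Finset.sum_congr rfl fun i hi => ?_
          have hi' : i < q := Finset.mem_range.mp hi
          simp only [← Matrix.mul_assoc]
          have e : p + q + 1 = p + (q - 1 - i) + (i + 2) := by omega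
          rw [e, dz_pow hA1 (i + 2) (q - 1 - i)]
      _ = (∑ j ∈ Finset.range q, A ^ (p + j) * B * D ^ (q - 1 - j) * (1 - D * DD) :
            Matrix (Fin n) (Fin m) R) := by
          rw [← Finset.sum_range_reflect
            (fun j => A ^ (p + j) * B * D ^ (q - 1 - j) * (1 - D * DD)) q]
          refine Finset.sum_congr rfl fun i hi => ?_
          have hi' : i < q := Finset.mem_range.mp hi
          rw [show q - 1 - (q - 1 - i) = i from by omega]
      _ = _ := by
          rw [← Finset.sum_sub_distrib]
          refine Finset.sum_congr rfl fun j hj => ?_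
          have hj' : j < q := Finset.mem_range.mp hj
          rw [Matrix.mul_sub, Matrix.mul_one,
            Matrix.mul_assoc (A ^ (p + j) * B) (D ^ (q - 1 - j)) (D * DD),
            ← Matrix.mul_assoc (D ^ (q - 1 - j)) D DD, ← pow_succ,
            show q - 1 - j + 1 = q - j from by omega]
  have q2 : A ^ (p + q + 1) * ((1 - A * AD) * (∑ i ∈ Finset.range p, A ^ i * B * DD ^ (i + 2)))
      = 0 := by
    rw [← Matrix.mul_assoc, dz_pi hA1 q, Matrix.zero_mul]
  have q3 : A ^ (p + q + 1) * (AD * B * DD)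
      = (A ^ (p + q) * B * DD : Matrix (Fin n) (Fin m) R) := by
    simp only [← Matrix.mul_assoc]
    rw [dz_shift hA1 q]
  have q4 : (∑ i ∈ Finset.range (p + q + 1), A ^ i * B * D ^ (p + q - i)) * DD
      = ((∑ i ∈ Finset.range p, A ^ i * B * D ^ (p + q - 1 - i))
        + (∑ j ∈ Finset.range q, A ^ (p + j) * B * (D ^ (q - j) * DD))
        + A ^ (p + q) * B * DD : Matrix (Fin n) (Fin m) R) := by
    rw [Finset.sum_range_succ, Finset.sum_range_add (fun i => A ^ i * B * D ^ (p + q - i)) p q]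
    rw [Matrix.add_mul, Matrix.add_mul]
    have r1 : (∑ i ∈ Finset.range p, A ^ i * B * D ^ (p + q - i)) * DD
        = (∑ i ∈ Finset.range p, A ^ i * B * D ^ (p + q - 1 - i) :
          Matrix (Fin n) (Fin m) R) := by
      rw [Matrix.sum_mul]
      refine Finset.sum_congr rfl fun i hi => ?_
      have hi' : i < p := Finset.mem_range.mp hi
      rw [Matrix.mul_assoc (A ^ i * B) (D ^ (p + q - i)) DD,
        show p + q - i = q + (p - 1 - i) + 1 from by omega, dz_shift hD1 (p - 1 - i),
        show q + (p - 1 - i) = p + q - 1 - i from by omega]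
    have r2 : (∑ j ∈ Finset.range q, A ^ (p + j) * B * D ^ (p + q - (p + j))) * DD
        = (∑ j ∈ Finset.range q, A ^ (p + j) * B * (D ^ (q - j) * DD) :
          Matrix (Fin n) (Fin m) R) := by
      rw [Matrix.sum_mul]
      refine Finset.sum_congr rfl fun j hj => ?_
      rw [show p + q - (p + j) = q - j from by omega,
        Matrix.mul_assoc (A ^ (p + j) * B) (D ^ (q - j)) DD]
    have r3 : A ^ (p + q) * B * D ^ (p + q - (p + q)) * DD
        = (A ^ (p + q) * B * DD : Matrix (Fin n) (Fin m) R) := by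
      rw [show p + q - (p + q) = 0 from by omega, pow_zero, Matrix.mul_one]
    rw [r1, r2, r3]
  have esplit : (∑ i ∈ Finset.range (p + q), A ^ i * B * D ^ (p + q - 1 - i))
      = ((∑ i ∈ Finset.range p, A ^ i * B * D ^ (p + q - 1 - i))
        + ∑ j ∈ Finset.range q, A ^ (p + j) * B * D ^ (q - 1 - j) :
        Matrix (Fin n) (Fin m) R) := by
    rw [Finset.sum_range_add (fun i => A ^ i * B * D ^ (p + q - 1 - i)) p q]
    congr 1
    refine Finset.sum_congr rfl fun j hj => ?_
    have hj' : j < q := Finset.mem_range.mp hj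
    rw [show p + q - 1 - (p + j) = q - 1 - j from by omega]
  have e : A ^ (p + q + 1) * ((∑ i ∈ Finset.range q, AD ^ (i + 2) * B * D ^ i * (1 - D * DD))
        + (1 - A * AD) * (∑ i ∈ Finset.range p, A ^ i * B * DD ^ (i + 2))
        - AD * B * DD)
      = A ^ (p + q + 1) * (∑ i ∈ Finset.range q, AD ^ (i + 2) * B * D ^ i * (1 - D * DD))
        + A ^ (p + q + 1) * ((1 - A * AD) * (∑ i ∈ Finset.range p, A ^ i * B * DD ^ (i + 2)))
        - A ^ (p + q + 1) * (AD * B * DD) := by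
    simp only [Matrix.mul_add, Matrix.mul_sub]
  rw [e, q1, q2, q3, q4, esplit]
  abel

theorem blockPow (A : Matrix (Fin n) (Fin n) R) (B : Matrix (Fin n) (Fin m) R)
    (D : Matrix (Fin m) (Fin m) R) (k : ℕ) :
    (fromBlocks A B 0 D) ^ k =
      fromBlocks (A ^ k) (∑ i ∈ Finset.range k, A ^ i * B * D ^ (k - 1 - i)) 0 (D ^ k) := by
  induction k with
  | zero => simp [Matrix.fromBlocks_one]
  | succ k ih =>
    have h : A * (∑ i ∈ Finset.range k, A ^ i * B * D ^ (k - 1 - i)) + B * D ^ k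
        = ∑ i ∈ Finset.range (k + 1), A ^ i * B * D ^ (k + 1 - 1 - i) := by
      rw [Finset.sum_range_succ' (fun i => A ^ i * B * D ^ (k + 1 - 1 - i))]
      simp only [Matrix.mul_sum]
      simp only [pow_zero, one_mul, Nat.add_sub_cancel, Nat.sub_zero]
      congr 1
      · refine Finset.sum_congr rfl fun i hi => ?_
        have h2 : k - (i + 1) = k - 1 - i := by omega
        simp [Matrix.mul_assoc, h2, pow_succ']
      · rw [Matrix.one_mul]
    rw [pow_succ', ih, Matrix.fromBlocks_multiply, h]
    simp [← pow_succ']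

theorem main (hA1 : A ^ (p + 1) * AD = A ^ p) (hA2 : AD * A * AD = AD) (hA3 : A * AD = AD * A)
    (hD1 : D ^ (q + 1) * DD = D ^ q) (hD2 : DD * D * DD = DD) (hD3 : D * DD = DD * D) :
    (fromBlocks A B 0 D) ^ (p + q + 1)
      * (fromBlocks AD ((∑ i ∈ Finset.range q, AD ^ (i + 2) * B * D ^ i * (1 - D * DD))
        + (1 - A * AD) * (∑ i ∈ Finset.range p, A ^ i * B * DD ^ (i + 2))
        - AD * B * DD) 0 DD)
      = (fromBlocks A B 0 D) ^ (p + q)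
    ∧ (fromBlocks AD ((∑ i ∈ Finset.range q, AD ^ (i + 2) * B * D ^ i * (1 - D * DD))
        + (1 - A * AD) * (∑ i ∈ Finset.range p, A ^ i * B * DD ^ (i + 2))
        - AD * B * DD) 0 DD) * (fromBlocks A B 0 D)
      * (fromBlocks AD ((∑ i ∈ Finset.range q, AD ^ (i + 2) * B * D ^ i * (1 - D * DD))
        + (1 - A * AD) * (∑ i ∈ Finset.range p, A ^ i * B * DD ^ (i + 2))
        - AD * B * DD) 0 DD)
      = fromBlocks AD ((∑ i ∈ Finset.range q, AD ^ (i + 2) * B * D ^ i * (1 - D * DD))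
        + (1 - A * AD) * (∑ i ∈ Finset.range p, A ^ i * B * DD ^ (i + 2))
        - AD * B * DD) 0 DD
    ∧ (fromBlocks A B 0 D) * (fromBlocks AD ((∑ i ∈ Finset.range q, AD ^ (i + 2) * B * D ^ i * (1 - D * DD))
        + (1 - A * AD) * (∑ i ∈ Finset.range p, A ^ i * B * DD ^ (i + 2))
        - AD * B * DD) 0 DD)
      = (fromBlocks AD ((∑ i ∈ Finset.range q, AD ^ (i + 2) * B * D ^ i * (1 - D * DD))
        + (1 - A * AD) * (∑ i ∈ Finset.range p, A ^ i * B * DD ^ (i + 2))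
        - AD * B * DD) 0 DD) * (fromBlocks A B 0 D) := by
  refine ⟨?_, ?_, ?_⟩
  · rw [blockPow, blockPow, Matrix.fromBlocks_multiply]
    simp only [Matrix.mul_zero, Matrix.zero_mul, add_zero, zero_add,
      Nat.add_sub_cancel]
    rw [dz_shift hA1 q, key1 hA1 hA2 hA3 hD1 hD2 hD3,
      show p + q + 1 = q + p + 1 from by omega, dz_shift hD1 p,
      show q + p = p + q from by omega]
  · rw [Matrix.fromBlocks_multiply, Matrix.fromBlocks_multiply]
    simp only [Matrix.mul_zero, Matrix.zero_mul, add_zero, zero_add]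
    rw [hA2, hD2, key2 hA2 hA3 hD2 hD3]
  · rw [Matrix.fromBlocks_multiply, Matrix.fromBlocks_multiply]
    simp only [Matrix.mul_zero, Matrix.zero_mul, add_zero, zero_add]
    rw [key3 hA1 hA2 hA3 hD1 hD2 hD3, hA3, hD3]


theorem stmt4 {n m : ℕ} (A AD : Matrix (Fin n) (Fin n) DC) (B : Matrix (Fin n) (Fin m) DC)
    (D DD : Matrix (Fin m) (Fin m) DC) (p q : ℕ)
    (hA1 : A ^ (p + 1) * AD = A ^ p) (hA2 : AD * A * AD = AD) (hA3 : A * AD = AD * A)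
    (hD1 : D ^ (q + 1) * DD = D ^ q) (hD2 : DD * D * DD = DD) (hD3 : D * DD = DD * D) :
    let S := (∑ i ∈ Finset.range q, AD ^ (i + 2) * B * D ^ i * (1 - D * DD))
      + (1 - A * AD) * (∑ i ∈ Finset.range p, A ^ i * B * DD ^ (i + 2))
      - AD * B * DD
    let W := Matrix.fromBlocks A B 0 D
    let X := Matrix.fromBlocks AD S 0 DD
    W ^ (p + q + 1) * X = W ^ (p + q) ∧ X * W * X = X ∧ W * X = X * W := by
  intro S W X
  exact main hA1 hA2 hA3 hD1 hD2 hD3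
end
end

section
/- (Additive formula under \(\widehat{P}\widehat{Q} = O\).) Let \(\widehat{P}, \widehat{Q}\) be square dual complex matrices with dual Drazin inverses \(\widehat{P}^D\) (index \(r\)) and \(\widehat{Q}^D\) (index \(t\)), and suppose \(\widehat{P}\widehat{Q} = O\). Then \((I - \widehat{Q}\widehat{Q}^D) \sum_{i=0}^{t-1} \widehat{Q}^i (\widehat{P}^D)^{i+1} + \sum_{i=0}^{r-1} (\widehat{Q}^D)^{i+1} \widehat{P}^i (I - \widehat{P}\widehat{P}^D)\) is a dual Drazin inverse of \(\widehat{P} + \widehat{Q}\) (with respect to index \(r + t\)). -/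
open Matrix Finset

open Finset

section
variable {R : Type*} [Ring R]

lemma mul00 {x y : R} (h : x * y = 0) (i j : ℕ) :
    x ^ (i+1) * y ^ (j+1) = 0 := by
  rw [pow_succ, pow_succ', mul_assoc, ← mul_assoc x y, h, zero_mul, mul_zero]

lemma hpd2 {p pd : R} (hP2 : pd*p*pd = pd) (hP3 : p*pd = pd*p) :
    pd*(pd*p) = pd := by
  rw [← hP3, ← mul_assoc, hP2]

lemma hqd2 {q qd : R} (hQ2 : qd*q*qd = qd) (hQ3 : q*qd = qd*q) :
    q * (qd * qd) = qd := by
  rw [← mul_assoc, hQ3, hQ2]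

lemma base_pdq {p pd q : R} (hP2 : pd*p*pd = pd) (hP3 : p*pd = pd*p) (hPQ : p*q = 0) :
    pd * q = 0 := by
  conv_lhs => rw [← hpd2 hP2 hP3]
  rw [mul_assoc, mul_assoc, hPQ, mul_zero, mul_zero]

lemma base_pqd {p q qd : R} (hQ2 : qd*q*qd = qd) (hQ3 : q*qd = qd*q) (hPQ : p*q = 0) :
    p * qd = 0 := by
  conv_lhs => rw [← hqd2 hQ2 hQ3]
  rw [← mul_assoc, hPQ, zero_mul]

lemma idem_e {p pd : R} (hP2 : pd*p*pd = pd) : (p*pd)*(p*pd) = p*pd := by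
  rw [mul_assoc, ← mul_assoc pd p pd, hP2]

lemma e_absorb_left {p pd : R} (hP2 : pd*p*pd = pd) (i : ℕ) :
    pd^(i+1) * (p*pd) = pd^(i+1) := by
  rw [pow_succ, mul_assoc, ← mul_assoc pd p pd, hP2]

lemma pdpow_p {p pd : R} (hP2 : pd*p*pd = pd) (hP3 : p*pd = pd*p) (i : ℕ) :
    pd^(i+2) * p = pd^(i+1) := by
  rw [pow_succ, mul_assoc, ← hP3, e_absorb_left hP2]

lemma q_mul_qdpow {q qd : R} (hQ3 : q*qd = qd*q) (i : ℕ) :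
    q * qd^(i+1) = qd^i * (q*qd) := by
  have hc : Commute q qd := hQ3
  rw [pow_succ, ← mul_assoc, (hc.pow_right i).eq, mul_assoc]

lemma q_mul_qdpow' {q qd : R} (hQ2 : qd*q*qd = qd) (hQ3 : q*qd = qd*q) (i : ℕ) :
    q * qd^(i+2) = qd^(i+1) := by
  rw [q_mul_qdpow hQ3, pow_succ, mul_assoc, ← mul_assoc qd q qd, hQ2]

lemma pow_absorb {q qd : R} {t : ℕ} (hQ1 : q^(t+1)*qd = q^t) (m : ℕ) :
    q^(t+m) * (q*qd) = q^(t+m) := by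
  have h : q^(t+m) * q = q^m * q^(t+1) := by
    rw [← pow_succ, ← pow_add]; ring_nf
  rw [← mul_assoc, h, mul_assoc, hQ1, ← pow_add]
  ring_nf

lemma pow_pi {q qd : R} {t : ℕ} (hQ1 : q^(t+1)*qd = q^t) (m : ℕ) :
    q^(t+m) * (1 - q*qd) = 0 := by
  rw [mul_sub, mul_one, pow_absorb hQ1, sub_self]

lemma pi_pow {q qd : R} {t : ℕ} (hQ1 : q^(t+1)*qd = q^t) (hQ3 : q*qd = qd*q) (m : ℕ) :
    (1 - q*qd) * q^(t+m) = 0 := by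
  have hc : Commute (q^(t+m)) (1 - q*qd) :=
    (Commute.one_right _).sub_right (((Commute.refl q).mul_right hQ3).pow_left _)
  rw [← hc.eq, pow_pi hQ1]

lemma powpow_e {q qd : R} (hQ2 : qd*q*qd = qd) (hQ3 : q*qd = qd*q) (m : ℕ) :
    q^(m+1) * qd^(m+1) = q*qd := by
  have hc : Commute q qd := hQ3
  rw [← hc.mul_pow]
  induction m with
  | zero => rw [pow_one]
  | succ k ih => rw [pow_succ, ih, mul_assoc, ← mul_assoc qd q qd, hQ2]

lemma apow {p q : R} (hPQ : p * q = 0) (N : ℕ) :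
    (p+q)^N = ∑ i ∈ range (N+1), q^i * p^(N-i) := by
  induction N with
  | zero => simp
  | succ N ih =>
    have hz : ∀ m : ℕ, p^(m+1) * q = 0 := fun m => by simpa using mul00 hPQ m 0
    rw [pow_succ, ih, Finset.sum_mul]
    have e1 : ∀ i ∈ range (N+1), (q^i * p^(N-i)) * (p+q)
        = q^i * p^(N+1-i) + (q^i * p^(N-i)) * q := by
      intro i hi
      rw [mem_range] at hi
      rw [mul_add, mul_assoc, ← pow_succ, show N - i + 1 = N + 1 - i by omega]
    rw [Finset.sum_congr rfl e1, Finset.sum_add_distrib, Finset.sum_range_succ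
      (fun i => (q^i * p^(N-i)) * q)]
    have e2 : ∀ i ∈ range N, (q^i * p^(N-i)) * q = 0 := by
      intro i hi
      rw [mem_range] at hi
      obtain ⟨m, hm⟩ : ∃ m, N - i = m + 1 := ⟨N - i - 1, by omega⟩
      rw [hm, mul_assoc, hz m, mul_zero]
    rw [Finset.sum_eq_zero e2, zero_add, Finset.sum_range_succ
      (fun i => q^i * p^(N+1-i))]
    conv_rhs => rw [Finset.sum_range_succ, Finset.sum_range_succ]
    simp [pow_succ]



lemma key (p pd q qd : R) (r t : ℕ)
    (hP1 : p ^ (r + 1) * pd = p ^ r) (hP2 : pd * p * pd = pd) (hP3 : p * pd = pd * p)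
    (hQ1 : q ^ (t + 1) * qd = q ^ t) (hQ2 : qd * q * qd = qd) (hQ3 : q * qd = qd * q)
    (hPQ : p * q = 0)
    (X : R)
    (hX : X = (1 - q * qd) * (∑ i ∈ range t, q ^ i * pd ^ (i + 1))
      + ∑ i ∈ range r, qd ^ (i + 1) * p ^ i * (1 - p * pd)) :
    (p + q) ^ (r + t + 1) * X = (p + q) ^ (r + t) ∧
    X * (p + q) * X = X ∧ (p + q) * X = X * (p + q) := by
  -- abbreviations
  set πp := 1 - p * pd with hπp
  set πq := 1 - q * qd with hπq
  set S := ∑ i ∈ range (t+1), q ^ i * pd ^ (i+1) with hS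
  set U := ∑ i ∈ range (r+1), qd ^ (i+1) * p ^ i with hU
  set A := ∑ i ∈ range t, q ^ (i+1) * pd ^ (i+1) with hA
  set B := ∑ i ∈ range r, qd ^ (i+1) * p ^ (i+1) with hB
  -- basic zero products
  have hpdq : pd * q = 0 := base_pdq hP2 hP3 hPQ
  have hpqd : p * qd = 0 := base_pqd hQ2 hQ3 hPQ
  have hpdqd : pd * qd = 0 := by
    conv_lhs => rw [← hqd2 hQ2 hQ3]
    rw [← mul_assoc, hpdq, zero_mul]
  have z_pq : ∀ i j, p^(i+1) * q^(j+1) = 0 := mul00 hPQ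
  have z_pdq : ∀ i j, pd^(i+1) * q^(j+1) = 0 := mul00 hpdq
  have z_pqd : ∀ i j, p^(i+1) * qd^(j+1) = 0 := mul00 hpqd
  have z_pdqd : ∀ i j, pd^(i+1) * qd^(j+1) = 0 := mul00 hpdqd
  have zpq1 : ∀ i, p^(i+1) * q = 0 := fun i => by simpa using z_pq i 0
  have zpdq1 : ∀ i, pd^(i+1) * q = 0 := fun i => by simpa using z_pdq i 0
  have z1pq : ∀ j, p * q^(j+1) = 0 := fun j => by simpa using z_pq 0 j
  have z1pdq : ∀ j, pd * q^(j+1) = 0 := fun j => by simpa using z_pdq 0 j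
  have z1pqd : ∀ j, p * qd^(j+1) = 0 := fun j => by simpa using z_pqd 0 j
  have z1pdqd : ∀ j, pd * qd^(j+1) = 0 := fun j => by simpa using z_pdqd 0 j
  -- pi absorption
  have hπq_qpow : ∀ m, πq * q^(t+m) = 0 := fun m => by
    rw [hπq]; exact pi_pow hQ1 hQ3 m
  have hqpow_πq : ∀ m, q^(t+m) * πq = 0 := fun m => by
    rw [hπq]; exact pow_pi hQ1 m
  have hppow_πp : ∀ m, p^(r+m) * πp = 0 := fun m => by
    rw [hπp]; exact pow_pi hP1 m
  have hπp_ppow : ∀ m, πp * p^(r+m) = 0 := fun m => by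
    rw [hπp]; exact pi_pow hP1 hP3 m
  have hpπq : p * πq = p := by
    rw [hπq, mul_sub, mul_one, ← mul_assoc, hPQ, zero_mul, sub_zero]
  have hppowπq : ∀ m, p^(m+1) * πq = p^(m+1) := fun m => by
    rw [hπq, mul_sub, mul_one, ← mul_assoc, zpq1 m, zero_mul, sub_zero]
  have hqπq : q * πq = πq * q := by
    have h : q*(q*qd) = (q*qd)*q := by rw [mul_assoc, ← hQ3]
    rw [hπq, mul_sub, sub_mul, mul_one, one_mul, h]
  have hπpp : πp * p = p * πp := by
    have h : p*(p*pd) = (p*pd)*p := by rw [mul_assoc, ← hP3]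
    rw [hπp, mul_sub, sub_mul, mul_one, one_mul, h]
  have hπpq : πp * q = q := by
    rw [hπp, sub_mul, one_mul, mul_assoc, hpdq, mul_zero, sub_zero]
  -- X in terms of S, U
  have hX' : X = πq * S + U * πp := by
    have h1 : πq * (q^t * pd^(t+1)) = 0 := by
      rw [← mul_assoc, (by simpa using hπq_qpow 0 : πq * q^t = 0), zero_mul]
    have h2 : (qd^(r+1) * p^r) * πp = 0 := by
      rw [mul_assoc, (by simpa using hppow_πp 0 : p^r * πp = 0), mul_zero]
    rw [hX, hS, hU, Finset.sum_range_succ, Finset.sum_range_succ, mul_add, add_mul,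
      Finset.sum_mul, h1, h2, add_zero, add_zero]
  -- products with S and U
  have hpS : p * S = p * pd := by
    rw [hS, Finset.mul_sum, Finset.sum_range_succ']
    rw [Finset.sum_eq_zero (fun i _ => by
      rw [← mul_assoc, z1pq i, zero_mul] : ∀ i ∈ range t, p * (q^(i+1) * pd^(i+1+1)) = 0)]
    simp
  have hqS : πq * (q * S) = πq * A := by
    have h1 : q * S = A + q^(t+1) * pd^(t+1) := by
      rw [hS, Finset.mul_sum]
      rw [Finset.sum_congr rfl (fun i _ => by
        rw [← mul_assoc, ← pow_succ'] : ∀ i ∈ range (t+1),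
          q * (q^i * pd^(i+1)) = q^(i+1) * pd^(i+1))]
      rw [Finset.sum_range_succ, hA]
    have h2 : πq * (q^(t+1) * pd^(t+1)) = 0 := by
      rw [← mul_assoc, hπq_qpow 1, zero_mul]
    rw [h1, mul_add, h2, add_zero]
  have hSp : S * p = p * pd + A := by
    rw [hS, Finset.sum_mul, Finset.sum_range_succ']
    rw [Finset.sum_congr rfl (fun i _ => by
      rw [mul_assoc, pdpow_p hP2 hP3] : ∀ i ∈ range t,
        (q^(i+1) * pd^(i+1+1)) * p = q^(i+1) * pd^(i+1))]
    rw [← hA]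
    simp [hP3, add_comm]
  have hSq : S * q = 0 := by
    rw [hS, Finset.sum_mul]
    exact Finset.sum_eq_zero fun i _ => by rw [mul_assoc, zpdq1 i, mul_zero]
  have hUq : U * q = q * qd := by
    rw [hU, Finset.sum_mul, Finset.sum_range_succ']
    rw [Finset.sum_eq_zero (fun i _ => by
      rw [mul_assoc, zpq1 i, mul_zero] : ∀ i ∈ range r,
        (qd^(i+1+1) * p^(i+1)) * q = 0), zero_add]
    simp [← hQ3]
  have hUp : (U * p) * πp = B * πp := by
    have h1 : U * p = B + qd^(r+1) * p^(r+1) := by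
      rw [hU, Finset.sum_mul]
      rw [Finset.sum_congr rfl (fun i _ => by
        rw [mul_assoc, ← pow_succ] : ∀ i ∈ range (r+1),
          (qd^(i+1) * p^i) * p = qd^(i+1) * p^(i+1))]
      rw [Finset.sum_range_succ, hB]
    have h2 : (qd^(r+1) * p^(r+1)) * πp = 0 := by
      rw [mul_assoc, hppow_πp 1, mul_zero]
    rw [h1, add_mul, h2, add_zero]
  have hqU : q * U = q * qd + B := by
    rw [hU, Finset.mul_sum, Finset.sum_range_succ']
    rw [Finset.sum_congr rfl (fun i _ => by
      rw [← mul_assoc, q_mul_qdpow' hQ2 hQ3] : ∀ i ∈ range r,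
        q * (qd^(i+1+1) * p^(i+1)) = qd^(i+1) * p^(i+1))]
    rw [← hB]
    simp [add_comm]
  have hpU : p * U = 0 := by
    rw [hU, Finset.mul_sum]
    exact Finset.sum_eq_zero fun i _ => by rw [← mul_assoc, z1pqd i, zero_mul]
  -- the two sides
  have haX : (p + q) * X = p * pd + ((q * qd) * πp + (πq * A + B * πp)) := by
    rw [hX', mul_add, add_mul, add_mul]
    rw [← mul_assoc p πq S, hpπq, hpS]
    rw [← mul_assoc q πq S, hqπq, mul_assoc πq q S, hqS]
    rw [← mul_assoc p U πp, hpU, zero_mul]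
    rw [← mul_assoc q U πp, hqU, add_mul]
    abel
  have hXa : X * (p + q) = p * pd + ((q * qd) * πp + (πq * A + B * πp)) := by
    rw [hX', add_mul, mul_add, mul_add]
    rw [mul_assoc πq S p, hSp, mul_assoc πq S q, hSq, mul_zero]
    rw [mul_assoc U πp p, hπpp, ← mul_assoc U p πp, hUp]
    rw [mul_assoc U πp q, hπpq, hUq]
    rw [hπq, hπp]
    noncomm_ring
  have hcomm : (p + q) * X = X * (p + q) := haX.trans hXa.symm
  -- condition 2 pieces
  have hSe : S * (p * pd) = S := by
    rw [hS, Finset.sum_mul]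
    rw [Finset.sum_congr rfl (fun i _ => by
      rw [mul_assoc, e_absorb_left hP2] : ∀ i ∈ range (t+1),
        (q^i * pd^(i+1)) * (p*pd) = q^i * pd^(i+1))]
  have hπpe : πp * (p * pd) = 0 := by
    rw [hπp, sub_mul, one_mul, idem_e hP2, sub_self]
  have hSeq : S * (q * qd) = 0 := by
    rw [hS, Finset.sum_mul]
    exact Finset.sum_eq_zero fun i _ => by
      rw [mul_assoc, ← mul_assoc (pd^(i+1)) q qd, zpdq1 i, zero_mul, mul_zero]
  have hπpeq : πp * (q * qd) = q * qd := by
    rw [hπp, sub_mul, one_mul, mul_assoc p pd, ← mul_assoc pd q qd, hpdq, zero_mul,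
      mul_zero, sub_zero]
  have hUeq : U * (q * qd) = qd := by
    rw [hU, Finset.sum_mul, Finset.sum_range_succ']
    rw [Finset.sum_eq_zero (fun i _ => by
      rw [mul_assoc, ← mul_assoc (p^(i+1)) q qd, zpq1 i, zero_mul, mul_zero] :
        ∀ i ∈ range r, (qd^(i+1+1) * p^(i+1)) * (q*qd) = 0), zero_add]
    simp [← mul_assoc, hQ2]
  have hSπq : S * πq = S := by
    rw [hπq, mul_sub, mul_one, hSeq, sub_zero]
  have hSA : S * A = 0 := by
    rw [hS, Finset.sum_mul]
    refine Finset.sum_eq_zero fun i _ => ?_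
    rw [hA, Finset.mul_sum]
    exact Finset.sum_eq_zero fun j _ => by
      rw [mul_assoc, ← mul_assoc (pd^(i+1)), z_pdq i j, zero_mul, mul_zero]
  have hSB : S * B = 0 := by
    rw [hS, Finset.sum_mul]
    refine Finset.sum_eq_zero fun i _ => ?_
    rw [hB, Finset.mul_sum]
    exact Finset.sum_eq_zero fun j _ => by
      rw [mul_assoc, ← mul_assoc (pd^(i+1)), z_pdqd i j, zero_mul, mul_zero]
  have heA : (p * pd) * A = 0 := by
    rw [hA, Finset.mul_sum]
    exact Finset.sum_eq_zero fun j _ => by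
      rw [mul_assoc p pd, ← mul_assoc pd (q^(j+1)), z1pdq j, zero_mul, mul_zero]
  have hpA : ∀ i, p^(i+1) * A = 0 := fun i => by
    rw [hA, Finset.mul_sum]
    exact Finset.sum_eq_zero fun j _ => by rw [← mul_assoc, z_pq i j, zero_mul]
  have hpB : ∀ i, p^(i+1) * B = 0 := fun i => by
    rw [hB, Finset.mul_sum]
    exact Finset.sum_eq_zero fun j _ => by rw [← mul_assoc, z_pqd i j, zero_mul]
  have hπpB : πp * B = B := by
    have h : (p*pd) * B = 0 := by
      rw [hB, Finset.mul_sum]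
      exact Finset.sum_eq_zero fun j _ => by
        rw [mul_assoc p pd, ← mul_assoc pd (qd^(j+1)), z1pdqd j, zero_mul, mul_zero]
    rw [hπp, sub_mul, one_mul, h, sub_zero]
  have hUA : U * A = qd * A := by
    rw [hU, Finset.sum_mul, Finset.sum_range_succ']
    rw [Finset.sum_eq_zero (fun i _ => by
      rw [mul_assoc, hpA i, mul_zero] :
        ∀ i ∈ range r, (qd^(i+1+1) * p^(i+1)) * A = 0), zero_add]
    simp
  have hUB : U * B = qd * B := by
    rw [hU, Finset.sum_mul, Finset.sum_range_succ']
    rw [Finset.sum_eq_zero (fun i _ => by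
      rw [mul_assoc, hpB i, mul_zero] :
        ∀ i ∈ range r, (qd^(i+1+1) * p^(i+1)) * B = 0), zero_add]
    simp
  have hUqdB : U = qd * B + qd := by
    rw [hU, Finset.sum_range_succ', hB, Finset.mul_sum]
    rw [Finset.sum_congr rfl (fun i _ => by
      rw [← mul_assoc, ← pow_succ'] : ∀ i ∈ range r,
        qd * (qd^(i+1) * p^(i+1)) = qd^(i+1+1) * p^(i+1))]
    simp
  have hcond2 : X * (p + q) * X = X := by
    have h0 : (p*pd) * (q*qd) = 0 := by
      rw [mul_assoc p pd, ← mul_assoc pd q qd, hpdq, zero_mul, mul_zero]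
    have hππ : πp * πq = 1 - q*qd - p*pd := by
      rw [hπp, hπq, sub_mul, one_mul, mul_sub, mul_one, h0, sub_zero]
    have c1 : X * (p*pd) = πq * S := by
      rw [hX', add_mul, mul_assoc, hSe, mul_assoc, hπpe, mul_zero, add_zero]
    have c2 : X * ((q*qd) * πp) = qd * πp := by
      have hXeq : X * (q*qd) = qd := by
        rw [hX', add_mul, mul_assoc, hSeq, mul_zero, zero_add, mul_assoc, hπpeq, hUeq]
      rw [← mul_assoc, hXeq]
    have c3 : X * (πq * A) = 0 := by
      rw [← mul_assoc, hX', add_mul, mul_assoc πq S πq, hSπq, mul_assoc U πp πq, hππ]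
      rw [add_mul, mul_assoc πq S A, hSA, mul_zero, zero_add, mul_assoc, sub_mul,
        heA, sub_zero, sub_mul, one_mul]
      rw [mul_sub, hUA, ← mul_assoc U (q*qd) A, hUeq, sub_self]
    have c4 : X * (B * πp) = (qd * B) * πp := by
      have hXB : X * B = qd * B := by
        rw [hX', add_mul, mul_assoc, hSB, mul_zero, zero_add, mul_assoc, hπpB, hUB]
      rw [← mul_assoc, hXB]
    rw [mul_assoc, haX, mul_add, mul_add, mul_add, c1, c2, c3, c4, zero_add, hX',
      hUqdB, add_mul]
    abel
  -- condition 1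
  have hker : (p + q) ^ (r + t) * (1 - (p + q) * X) = 0 := by
    have hπ : 1 - (p + q) * X = πq*πp - πq*A - B*πp := by
      rw [haX, hπq, hπp]; noncomm_ring
    rw [hπ, apow hPQ (r+t), Finset.sum_range_succ, Nat.sub_self, pow_zero, mul_one,
      add_mul, Finset.sum_mul]
    have hterm : ∀ i ∈ range (r+t), (q^i * p^(r+t-i)) * (πq*πp - πq*A - B*πp)
        = q^i * (p^(r+t-i) * πp) := by
      intro i hi; rw [mem_range] at hi
      obtain ⟨m, hm⟩ : ∃ m, r + t - i = m+1 := ⟨r+t-i-1, by omega⟩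
      rw [hm, mul_assoc]
      congr 1
      have h1 : p^(m+1) * (πq*πp) = p^(m+1)*πp := by rw [← mul_assoc, hppowπq]
      have h2 : p^(m+1) * (πq*A) = 0 := by rw [← mul_assoc, hppowπq, hpA]
      have h3 : p^(m+1) * (B*πp) = 0 := by rw [← mul_assoc, hpB, zero_mul]
      rw [mul_sub, mul_sub, h1, h2, h3, sub_zero, sub_zero]
    rw [Finset.sum_congr rfl hterm]
    have hq0 : q^(r+t) * πq = 0 := by rw [add_comm r t]; exact hqpow_πq r
    have hlast : q^(r+t) * (πq*πp - πq*A - B*πp)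
        = - ∑ m ∈ range r, q^(r+t-1-m) * ((q*qd) * (p^(m+1) * πp)) := by
      rw [mul_sub, mul_sub, ← mul_assoc, hq0, zero_mul, ← mul_assoc, hq0, zero_mul,
        sub_zero, zero_sub, neg_inj]
      rw [hB, Finset.sum_mul, Finset.mul_sum]
      refine Finset.sum_congr rfl fun m hm => ?_
      rw [mem_range] at hm
      have hsplit : q^(r+t) = q^(r+t-1-m) * q^(m+1) := by
        rw [← pow_add]; congr 1; omega
      rw [hsplit, mul_assoc (qd^(m+1)) (p^(m+1)) πp,
        mul_assoc (q^(r+t-1-m)) (q^(m+1)) _, ← mul_assoc (q^(m+1)) (qd^(m+1)) _,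
        powpow_e hQ2 hQ3]
    rw [hlast]
    have hrefl : ∑ i ∈ range (r+t), q^i * (p^(r+t-i) * πp)
        = ∑ j ∈ range (r+t), q^(r+t-1-j) * (p^(j+1) * πp) := by
      rw [← Finset.sum_range_reflect]
      refine Finset.sum_congr rfl fun j hj => ?_
      rw [mem_range] at hj
      have h : r + t - (r+t-1-j) = j+1 := by omega
      rw [h]
    have hext : ∑ m ∈ range r, q^(r+t-1-m) * ((q*qd) * (p^(m+1) * πp))
        = ∑ m ∈ range (r+t), q^(r+t-1-m) * ((q*qd) * (p^(m+1) * πp)) := by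
      refine Finset.sum_subset (Finset.range_subset_range.mpr (by omega)) fun m hm hnot => ?_
      rw [mem_range] at hm
      rw [mem_range, not_lt] at hnot
      have h : m+1 = r + (m+1-r) := by omega
      rw [h, hppow_πp, mul_zero, mul_zero]
    rw [hrefl, hext]
    have hmain : ∑ j ∈ range (r+t), q^(r+t-1-j) * (p^(j+1) * πp)
        = ∑ j ∈ range (r+t), q^(r+t-1-j) * ((q*qd) * (p^(j+1) * πp)) := by
      refine Finset.sum_congr rfl fun j hj => ?_
      rw [mem_range] at hj
      by_cases hc : j < r
      · have heq : r+t-1-j = t + (r-1-j) := by omega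
        have hn : q^(r+t-1-j) * (q*qd) = q^(r+t-1-j) := by
          rw [heq]; exact pow_absorb hQ1 _
        conv_rhs => rw [← mul_assoc, hn]
      · have h0 : p^(j+1) * πp = 0 := by
          have h : j+1 = r + (j+1-r) := by omega
          rw [h]; exact hppow_πp _
        rw [h0, mul_zero, mul_zero, mul_zero]
    rw [hmain, add_neg_cancel]
  have hcond1 : (p + q) ^ (r + t + 1) * X = (p + q) ^ (r + t) := by
    have h2 : (p+q)^(r+t) * ((p+q) * X) = (p+q)^(r+t) := by
      have := hker
      rw [mul_sub, mul_one, sub_eq_zero] at this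
      exact this.symm
    rw [pow_succ, mul_assoc, h2]
  exact ⟨hcond1, hcond2, hcomm⟩

end

theorem stmt6 {n : ℕ} (P PD Q QD : Matrix (Fin n) (Fin n) DC) (r t : ℕ)
    (hP1 : P ^ (r + 1) * PD = P ^ r) (hP2 : PD * P * PD = PD) (hP3 : P * PD = PD * P)
    (hQ1 : Q ^ (t + 1) * QD = Q ^ t) (hQ2 : QD * Q * QD = QD) (hQ3 : Q * QD = QD * Q)
    (hPQ : P * Q = 0) :
    let X := (1 - Q * QD) * (∑ i ∈ Finset.range t, Q ^ i * PD ^ (i + 1))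
      + ∑ i ∈ Finset.range r, QD ^ (i + 1) * P ^ i * (1 - P * PD)
    (P + Q) ^ (r + t + 1) * X = (P + Q) ^ (r + t) ∧
    X * (P + Q) * X = X ∧ (P + Q) * X = X * (P + Q) := by
  intro X
  exact key P PD Q QD r t hP1 hP2 hP3 hQ1 hQ2 hQ3 hPQ X rfl
end

section
/- Let \(\widehat{A}, \widehat{B}\) be square dual complex matrices of the same size with dual Drazin inverses \(\widehat{A}^D\) and \(\widehat{B}^D\), and suppose \(\widehat{A}\widehat{A}^\pi \widehat{B} = \widehat{B}\widehat{A}\widehat{A}^\pi\), where \(\widehat{A}^\pi = I - \widehat{A}\widehat{A}^D\). Then the matrix \(\widehat{X} = \begin{pmatrix} O & \widehat{B}\widehat{B}^D \\ \widehat{B}^D & -\widehat{A}\widehat{A}^\pi \widehat{B}^D \end{pmatrix}\) satisfies \(\widehat{V}\widehat{X} = \widehat{X}\widehat{V}\) and \(\widehat{X}\widehat{V}\widehat{X} = \widehat{X}\), where \(\widehat{V} = \begin{pmatrix} \widehat{A}\widehat{A}^\pi & \widehat{B} \\ I & O \end{pmatrix}\); moreover \(\widehat{V}\widehat{X} = \begin{pmatrix}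 \widehat{B}\widehat{B}^D & O \\ O & \widehat{B}\widehat{B}^D \end{pmatrix}\). -/
open Matrix

lemma drazin_comm {R : Type*} [Ring R] (a aD x : R) (k : ℕ)
    (h1 : a ^ (k + 1) * aD = a ^ k) (h2 : aD * a * aD = aD) (h3 : a * aD = aD * a)
    (hx : x * a = a * x) : x * aD = aD * x := by
  have hc : Commute a aD := h3
  have hcx : Commute x a := hx
  have he2 : (a * aD) * (a * aD) = a * aD := by
    rw [mul_assoc a aD, ← mul_assoc aD a aD, h2]
  have hepow : ∀ m : ℕ, (a * aD) ^ (m + 1) = a * aD := by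
    intro m
    induction m with
    | zero => simp
    | succ m ih => rw [pow_succ, ih, he2]
  have heL : a * aD = aD ^ (k + 1) * a ^ (k + 1) := by
    rw [← hepow k, h3, (hc.symm).mul_pow]
  have heR : a * aD = a ^ (k + 1) * aD ^ (k + 1) := by
    rw [← hepow k, hc.mul_pow]
  have hAe : a ^ (k + 1) * (a * aD) = a ^ (k + 1) := by
    rw [← mul_assoc, ← pow_succ, pow_succ' a (k + 1), mul_assoc, h1, ← pow_succ']
  have heA : (a * aD) * a ^ (k + 1) = a ^ (k + 1) := by
    rw [mul_assoc, (hc.symm.pow_right (k + 1)).eq, ← mul_assoc, mul_assoc a,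
      h1, ← pow_succ']
  have hxpow : x * a ^ (k + 1) = a ^ (k + 1) * x := (hcx.pow_right (k + 1)).eq
  have hex : (a * aD) * x = x * (a * aD) := by
    have h4 : (a * aD) * x = aD ^ (k + 1) * x * a ^ (k + 1) := by
      rw [heL, mul_assoc, ← hxpow, ← mul_assoc]
    have h5 : x * (a * aD) = a ^ (k + 1) * x * aD ^ (k + 1) := by
      rw [heR, ← mul_assoc, hxpow]
    have h6 : (a * aD) * x * (a * aD) = (a * aD) * x := by
      rw [h4, mul_assoc _ (a ^ (k + 1)) _, hAe, ← h4]
    have h7 : (a * aD) * (x * (a * aD)) = x * (a * aD) := by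
      rw [h5, ← mul_assoc, ← mul_assoc, heA]
    rw [← h7, ← mul_assoc, h6]
  have haDe : aD * (a * aD) = aD := by rw [← mul_assoc, h2]
  have heaD : (a * aD) * aD = aD := by rw [h3]; exact h2
  have l1 : x * (a * aD) * aD = x * aD := by rw [mul_assoc, heaD]
  have m1 : (a * aD) * x * aD = aD * (x * (a * aD)) := by
    calc (a * aD) * x * aD = aD * a * x * aD := by rw [h3]
      _ = aD * (x * a) * aD := by rw [mul_assoc aD a x, ← hx]
      _ = (aD * x) * (a * aD) := by rw [← mul_assoc aD x a, mul_assoc (aD * x) a aD]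
      _ = aD * (x * (a * aD)) := by rw [mul_assoc]
  rw [← l1, ← hex, m1, ← hex, ← mul_assoc, haDe]

theorem stmt8 {n : ℕ} (A AD B BD : Matrix (Fin n) (Fin n) DC) (kA kB : ℕ)
    (hA1 : A ^ (kA + 1) * AD = A ^ kA) (hA2 : AD * A * AD = AD) (hA3 : A * AD = AD * A)
    (hB1 : B ^ (kB + 1) * BD = B ^ kB) (hB2 : BD * B * BD = BD) (hB3 : B * BD = BD * B)
    (hc : A * (1 - A * AD) * B = B * (A * (1 - A * AD))) :
    let V := Matrix.fromBlocks (A * (1 - A * AD)) B 1 0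
    let X := Matrix.fromBlocks 0 (B * BD) BD (-(A * (1 - A * AD) * BD))
    V * X = X * V ∧ X * V * X = X ∧
    V * X = Matrix.fromBlocks (B * BD) 0 0 (B * BD) := by
  intro V X
  set C := A * (1 - A * AD) with hC
  have hCBD : C * BD = BD * C := drazin_comm B BD C kB hB1 hB2 hB3 hc
  have hEE : (B * BD) * (B * BD) = B * BD := by
    rw [mul_assoc B BD, ← mul_assoc BD B BD, hB2]
  have hBDE : BD * (B * BD) = BD := by rw [← mul_assoc, hB2]
  have hVX : V * X = Matrix.fromBlocks (B * BD) 0 0 (B * BD) := by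
    show Matrix.fromBlocks C B 1 0 * Matrix.fromBlocks 0 (B * BD) BD (-(C * BD)) = _
    rw [Matrix.fromBlocks_multiply]
    have e11 : C * 0 + B * BD = B * BD := by rw [mul_zero, zero_add]
    have e12 : C * (B * BD) + B * -(C * BD) = 0 := by
      rw [← mul_assoc, hc, mul_neg, mul_assoc, add_neg_cancel]
    have e21 : (1 : Matrix (Fin n) (Fin n) DC) * 0 + 0 * BD = 0 := by
      rw [mul_zero, zero_mul, add_zero]
    have e22 : (1 : Matrix (Fin n) (Fin n) DC) * (B * BD) + 0 * -(C * BD) = B * BD := by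
      rw [one_mul, zero_mul, add_zero]
    rw [e11, e12, e21, e22]
  have hXV : X * V = Matrix.fromBlocks (B * BD) 0 0 (B * BD) := by
    show Matrix.fromBlocks 0 (B * BD) BD (-(C * BD)) * Matrix.fromBlocks C B 1 0 = _
    rw [Matrix.fromBlocks_multiply]
    have e11 : (0 : Matrix (Fin n) (Fin n) DC) * C + (B * BD) * 1 = B * BD := by
      rw [zero_mul, mul_one, zero_add]
    have e12 : (0 : Matrix (Fin n) (Fin n) DC) * B + (B * BD) * 0 = 0 := by
      rw [zero_mul, mul_zero, add_zero]
    have e21 : BD * C + -(C * BD) * 1 = 0 := by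
      rw [mul_one, hCBD, add_neg_cancel]
    have e22 : BD * B + -(C * BD) * 0 = B * BD := by
      rw [mul_zero, add_zero, hB3]
    rw [e11, e12, e21, e22]
  refine ⟨hVX.trans hXV.symm, ?_, hVX⟩
  rw [mul_assoc, hVX]
  show Matrix.fromBlocks 0 (B * BD) BD (-(C * BD)) * _ =
    Matrix.fromBlocks 0 (B * BD) BD (-(C * BD))
  rw [Matrix.fromBlocks_multiply]
  have e11 : (0 : Matrix (Fin n) (Fin n) DC) * (B * BD) + (B * BD) * 0 = 0 := by
    rw [zero_mul, mul_zero, add_zero]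
  have e12 : (0 : Matrix (Fin n) (Fin n) DC) * 0 + (B * BD) * (B * BD) = B * BD := by
    rw [zero_mul, hEE, zero_add]
  have e21 : BD * (B * BD) + -(C * BD) * 0 = BD := by
    rw [mul_zero, add_zero, hBDE]
  have e22 : BD * 0 + -(C * BD) * (B * BD) = -(C * BD) := by
    rw [mul_zero, zero_add, neg_mul, mul_assoc, hBDE]
  rw [e11, e12, e21, e22]
end

section
/- Let \(\widehat{M} = \begin{pmatrix} \widehat{A} & \widehat{B} \\ \widehat{C} & O \end{pmatrix}\) be a dual complex block matrix with \(\widehat{B}\widehat{C} = O\), where \(\widehat{A}\) has a dual Drazin inverse \(\widehat{A}^D\) with index \(k\). Then \(\begin{pmatrix} \widehat{A}^D & (\widehat{A}^D)^2 \widehat{B} \\ \widehat{C}(\widehat{A}^D)^2 & \widehat{C}(\widehat{A}^D)^3 \widehat{B} \end{pmatrix}\) is a dual Drazin inverse of \(\widehat{M}\). -/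
open Matrix

theorem stmt11 {n m : ℕ} (A AD : Matrix (Fin n) (Fin n) DC)
    (B : Matrix (Fin n) (Fin m) DC) (C : Matrix (Fin m) (Fin n) DC) (k : ℕ)
    (hA1 : A ^ (k + 1) * AD = A ^ k) (hA2 : AD * A * AD = AD) (hA3 : A * AD = AD * A)
    (hBC : B * C = 0) :
    let M := Matrix.fromBlocks A B C 0
    let X := Matrix.fromBlocks AD (AD ^ 2 * B) (C * AD ^ 2) (C * AD ^ 3 * B)
    ∃ s, M ^ (s + 1) * X = M ^ s ∧ X * M * X = X ∧ M * X = X * M := by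
  intro M X
  have hAAD2 : A * AD ^ 2 = AD := by
    rw [sq, ← Matrix.mul_assoc, hA3, hA2]
  have hAD2A : AD ^ 2 * A = AD := by
    rw [sq, Matrix.mul_assoc, ← hA3, ← Matrix.mul_assoc, hA2]
  have hpow : ∀ j, A ^ (k + 1 + j) * AD = A ^ (k + j) := by
    intro j
    have h1 : A ^ (k + 1 + j) = A ^ j * A ^ (k + 1) := by
      rw [← pow_add]; ring_nf
    have h2 : A ^ (k + j) = A ^ j * A ^ k := by
      rw [← pow_add]; ring_nf
    rw [h1, h2, Matrix.mul_assoc, hA1]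
  have hMp : ∀ p : ℕ, M ^ (p + 2) =
      Matrix.fromBlocks (A ^ (p + 2)) (A ^ (p + 1) * B) (C * A ^ (p + 1)) (C * A ^ p * B) := by
    intro p
    induction p with
    | zero =>
      show M ^ 2 = _
      rw [sq]
      show Matrix.fromBlocks A B C 0 * Matrix.fromBlocks A B C 0 = _
      rw [Matrix.fromBlocks_multiply, Matrix.fromBlocks_inj]
      refine ⟨?_, ?_, ?_, ?_⟩
      · rw [hBC, add_zero, ← sq]
      · simp [pow_succ]
      · simp [pow_succ]
      · simp
    | succ p ih =>
      have hps : (p + 1) + 2 = (p + 2) + 1 := rfl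
      rw [hps, pow_succ, ih]
      show _ * Matrix.fromBlocks A B C 0 = _
      rw [Matrix.fromBlocks_multiply, Matrix.fromBlocks_inj]
      refine ⟨?_, ?_, ?_, ?_⟩
      · rw [Matrix.mul_assoc, hBC, Matrix.mul_zero, add_zero, ← pow_succ]
      · rw [Matrix.mul_zero, add_zero]
      · rw [Matrix.mul_assoc (C * A ^ p) B C, hBC, Matrix.mul_zero, add_zero,
          Matrix.mul_assoc, ← pow_succ]
      · rw [Matrix.mul_zero, add_zero]
  have e2 : A ^ (k + 1 + 2) * AD = A ^ (k + 2) := hpow 2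
  have e1 : A ^ (k + 1 + 1) * AD = A ^ (k + 1) := hpow 1
  have e1' : A ^ (k + 2) * AD = A ^ (k + 1) := e1
  have hXM : X * M =
      Matrix.fromBlocks (A * AD) (AD * B) (C * AD) (C * AD ^ 2 * B) := by
    show Matrix.fromBlocks AD (AD ^ 2 * B) (C * AD ^ 2) (C * AD ^ 3 * B) *
        Matrix.fromBlocks A B C 0 = _
    rw [Matrix.fromBlocks_multiply, Matrix.fromBlocks_inj]
    refine ⟨?_, ?_, ?_, ?_⟩
    · rw [Matrix.mul_assoc (AD ^ 2) B C, hBC, Matrix.mul_zero, add_zero, hA3]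
    · rw [Matrix.mul_zero, add_zero]
    · rw [Matrix.mul_assoc (C * AD ^ 3) B C, hBC, Matrix.mul_zero, add_zero,
        Matrix.mul_assoc C (AD ^ 2) A, hAD2A]
    · rw [Matrix.mul_zero, add_zero]
  have hMX : M * X =
      Matrix.fromBlocks (A * AD) (AD * B) (C * AD) (C * AD ^ 2 * B) := by
    show Matrix.fromBlocks A B C 0 *
        Matrix.fromBlocks AD (AD ^ 2 * B) (C * AD ^ 2) (C * AD ^ 3 * B) = _
    rw [Matrix.fromBlocks_multiply, Matrix.fromBlocks_inj]
    refine ⟨?_, ?_, ?_, ?_⟩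
    · rw [← Matrix.mul_assoc B C (AD ^ 2), hBC, Matrix.zero_mul, add_zero]
    · rw [Matrix.mul_assoc C (AD ^ 3) B, ← Matrix.mul_assoc B C (AD ^ 3 * B), hBC,
        Matrix.zero_mul, add_zero, ← Matrix.mul_assoc A (AD ^ 2) B, hAAD2]
    · rw [Matrix.zero_mul, add_zero]
    · rw [Matrix.zero_mul, add_zero, ← Matrix.mul_assoc C (AD ^ 2) B]
  refine ⟨k + 2, ?_, ?_, ?_⟩
  · -- M^(k+3) * X = M^(k+2)
    have h3 : (k + 2) + 1 = (k + 1) + 2 := rfl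
    rw [h3, hMp (k + 1), hMp k]
    show Matrix.fromBlocks _ _ _ _ *
        Matrix.fromBlocks AD (AD ^ 2 * B) (C * AD ^ 2) (C * AD ^ 3 * B) = _
    rw [Matrix.fromBlocks_multiply, Matrix.fromBlocks_inj]
    refine ⟨?_, ?_, ?_, ?_⟩
    · rw [Matrix.mul_assoc (A ^ (k + 1 + 1)) B (C * AD ^ 2), ← Matrix.mul_assoc B C (AD ^ 2),
        hBC, Matrix.zero_mul, Matrix.mul_zero, add_zero, e2]
    · rw [Matrix.mul_assoc (A ^ (k + 1 + 1)) B (C * AD ^ 3 * B),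
        Matrix.mul_assoc C (AD ^ 3) B, ← Matrix.mul_assoc B C (AD ^ 3 * B),
        hBC, Matrix.zero_mul, Matrix.mul_zero, add_zero]
      rw [sq, Matrix.mul_assoc AD AD B, ← Matrix.mul_assoc (A ^ (k + 1 + 2)) AD (AD * B),
        e2, ← Matrix.mul_assoc (A ^ (k + 2)) AD B, e1']
    · rw [Matrix.mul_assoc (C * A ^ (k + 1)) B (C * AD ^ 2),
        ← Matrix.mul_assoc B C (AD ^ 2), hBC, Matrix.zero_mul, Matrix.mul_zero, add_zero]
      rw [Matrix.mul_assoc C (A ^ (k + 1 + 1)) AD, e1]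
    · rw [Matrix.mul_assoc (C * A ^ (k + 1)) B (C * AD ^ 3 * B),
        ← Matrix.mul_assoc B (C * AD ^ 3) B, ← Matrix.mul_assoc B C (AD ^ 3), hBC,
        Matrix.zero_mul, Matrix.zero_mul, Matrix.mul_zero, add_zero]
      rw [sq, Matrix.mul_assoc AD AD B, ← Matrix.mul_assoc (C * A ^ (k + 1 + 1)) AD (AD * B),
        Matrix.mul_assoc C (A ^ (k + 1 + 1)) AD, e1,
        ← Matrix.mul_assoc (C * A ^ (k + 1)) AD B,
        Matrix.mul_assoc C (A ^ (k + 1)) AD, hA1]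
  · -- X * M * X = X
    rw [hXM]
    show Matrix.fromBlocks (A * AD) (AD * B) (C * AD) (C * AD ^ 2 * B) *
        Matrix.fromBlocks AD (AD ^ 2 * B) (C * AD ^ 2) (C * AD ^ 3 * B) =
        Matrix.fromBlocks AD (AD ^ 2 * B) (C * AD ^ 2) (C * AD ^ 3 * B)
    rw [Matrix.fromBlocks_multiply, Matrix.fromBlocks_inj]
    refine ⟨?_, ?_, ?_, ?_⟩
    · rw [Matrix.mul_assoc AD B (C * AD ^ 2), ← Matrix.mul_assoc B C (AD ^ 2), hBC,
        Matrix.zero_mul, Matrix.mul_zero, add_zero, hA3, hA2]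
    · rw [Matrix.mul_assoc AD B (C * AD ^ 3 * B), ← Matrix.mul_assoc B (C * AD ^ 3) B,
        ← Matrix.mul_assoc B C (AD ^ 3), hBC, Matrix.zero_mul, Matrix.zero_mul,
        Matrix.mul_zero, add_zero]
      have h : A * AD * (AD ^ 2 * B) = AD ^ 2 * B := by
        rw [hA3, Matrix.mul_assoc AD A (AD ^ 2 * B), ← Matrix.mul_assoc A (AD ^ 2) B,
          hAAD2, ← Matrix.mul_assoc, ← sq]
      rw [h]
    · rw [Matrix.mul_assoc (C * AD ^ 2) B (C * AD ^ 2), ← Matrix.mul_assoc B C (AD ^ 2),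
        hBC, Matrix.zero_mul, Matrix.mul_zero, add_zero, Matrix.mul_assoc C AD AD, ← sq]
    · rw [Matrix.mul_assoc (C * AD ^ 2) B (C * AD ^ 3 * B),
        ← Matrix.mul_assoc B (C * AD ^ 3) B, ← Matrix.mul_assoc B C (AD ^ 3), hBC,
        Matrix.zero_mul, Matrix.zero_mul, Matrix.mul_zero, add_zero,
        ← Matrix.mul_assoc (C * AD) (AD ^ 2) B, Matrix.mul_assoc C AD (AD ^ 2)]
      have h : AD * AD ^ 2 = AD ^ 3 := by noncomm_ring
      rw [h]
  · -- M * X = X * M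
    rw [hMX, hXM]
end

section
/- Let \(\widehat{A} = \begin{pmatrix} 0 & \widehat{x}^T & \widehat{a} \\ \widehat{y} & O & 0 \\ \widehat{b} & 0 & 0 \end{pmatrix}\) be a dual complex matrix of size \(m+2\), where \(\widehat{x}, \widehat{y} \in \mathbb{DC}^m\) and \(\widehat{a}, \widehat{b}\) are dual scalars, and set \(\widehat{\theta} = \widehat{x}^T\widehat{y} + \widehat{a}\widehat{b}\). If \(\widehat{\theta}\) is a unit in the dual numbers (equivalently its standard part is nonzero), then \(\begin{pmatrix} 0 & \widehat{\theta}^{-1}\widehat{x}^T & \widehat{\theta}^{-1}\widehat{a} \\ \widehat{y}\widehat{\theta}^{-1} & O & 0 \\ \widehat{b}\widehat{\theta}^{-1} & 0 & 0 \end{pmatrix}\) is the group inverse of \(\widehat{A}\): it satisfies \(\widehat{A}\widehat{X}\widehat{A} = \widehat{A}\), \(\widehat{X}\widehat{A}\widehat{X} = \widehat{X}\), \(\widehat{A}\widehat{X} = \widehat{X}\widehat{A}\). -/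
open Matrix

namespace Matrix

variable {R : Type*} {l n : Type*} [Fintype l] [Fintype n] [DecidableEq l] [DecidableEq n]

def IsGroupInverse [Ring R] (A X : Matrix (l ⊕ n) (l ⊕ n) R) : Prop :=
  A * X * A = A ∧ X * A * X = X ∧ A * X = X * A

/-- If `E` inverts `B * C`, both `A * X` and `X * A` equal the idempotent `diag(1, C E B)`. -/
theorem isGroupInverse_fromBlocks_zero [Ring R] (B : Matrix l n R) (C : Matrix n l R)
    (E : Matrix l l R) (hEl : E * (B * C) = 1) (hEr : B * C * E = 1) :
    IsGroupInverse (fromBlocks 0 B C 0) (fromBlocks 0 (E * B) (C * E) 0) := by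
  have hAX : fromBlocks 0 B C 0 * fromBlocks 0 (E * B) (C * E) 0
      = fromBlocks 1 0 0 (C * E * B) := by
    simp [fromBlocks_multiply, ← Matrix.mul_assoc, hEr]
  have hXA : fromBlocks 0 (E * B) (C * E) 0 * fromBlocks 0 B C 0
      = fromBlocks 1 0 0 (C * E * B) := by
    simp [fromBlocks_multiply, Matrix.mul_assoc, hEl]
  have hCEBC : C * E * B * C = C := by
    simp only [Matrix.mul_assoc, hEl, Matrix.mul_one]
  refine ⟨?_, ?_, hAX.trans hXA.symm⟩
  · simp [hAX, fromBlocks_multiply, hCEBC]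
  · simp [hXA, fromBlocks_multiply, ← Matrix.mul_assoc (C * E * B), hCEBC]

theorem isGroupInverse_fromBlocks_zero_of_mul_eq_smul_one [CommRing R] (B : Matrix l n R)
    (C : Matrix n l R) {θ : R} (hθ : IsUnit θ) (hBC : B * C = θ • 1) :
    IsGroupInverse (fromBlocks 0 B C 0)
      (fromBlocks 0 (Ring.inverse θ • B) (Ring.inverse θ • C) 0) := by
  simpa [Matrix.smul_mul, Matrix.mul_smul] using
    isGroupInverse_fromBlocks_zero B C (Ring.inverse θ • 1)
      (by rw [hBC, smul_mul_smul_comm, Matrix.one_mul, Ring.inverse_mul_cancel θ hθ, one_smul])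
      (by rw [hBC, smul_mul_smul_comm, Matrix.one_mul, Ring.mul_inverse_cancel θ hθ, one_smul])

end Matrix

theorem stmt19 {m : ℕ} (x y : Fin m → DC) (a b : DC)
    (hu : IsUnit (∑ i, x i * y i + a * b)) :
    let θ : DC := ∑ i, x i * y i + a * b
    let Brow : Matrix Unit (Fin m ⊕ Unit) DC := fun _ j => Sum.elim x (fun _ => a) j
    let Ccol : Matrix (Fin m ⊕ Unit) Unit DC := fun i _ => Sum.elim y (fun _ => b) i
    let A := Matrix.fromBlocks (0 : Matrix Unit Unit DC) Brow Ccol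
      (0 : Matrix (Fin m ⊕ Unit) (Fin m ⊕ Unit) DC)
    let X := Matrix.fromBlocks (0 : Matrix Unit Unit DC)
      ((fun _ j => Ring.inverse θ * Sum.elim x (fun _ => a) j) :
        Matrix Unit (Fin m ⊕ Unit) DC)
      ((fun i _ => Sum.elim y (fun _ => b) i * Ring.inverse θ) :
        Matrix (Fin m ⊕ Unit) Unit DC)
      (0 : Matrix (Fin m ⊕ Unit) (Fin m ⊕ Unit) DC)
    A * X * A = A ∧ X * A * X = X ∧ A * X = X * A := by
  intro θ Brow Ccol A X
  have hBC : Brow * Ccol = θ • 1 := by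
    refine Matrix.ext fun _ _ => ?_
    rw [mul_apply]
    simp [Brow, Ccol, θ, Fintype.sum_sum_type]
  have hX : X = fromBlocks 0 (Ring.inverse θ • Brow) (Ring.inverse θ • Ccol) 0 := by
    dsimp only [X]
    congr 1
    exact Matrix.ext fun _ _ => mul_comm _ _
  rw [hX]
  exact isGroupInverse_fromBlocks_zero_of_mul_eq_smul_one Brow Ccol hu hBC
end
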